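/- arXiv:1105.3411 — 4 statements merged into one kernel-verified Lean document; each statement's English description precedes it below -/
import Mathlib

section
/- For every even integer k ≥ 4 there exists an integer n₀ such that for every n ≥ n₀ divisible by k+1, there exists a k-graph H on n vertices with δ_{k−1}(H) ≥ 2n/3 − k that contains no K_{k+1}^k-factor. (Consequently t^k(n, k+1) ≥ 2n/3 − k + 1 for even k ≥ 4; the construction partitions the vertex set into three nearly equal parts V₁, V₂, V₃ with |V₁| ≢ |V₂| (mod 2) and takes as edges all k-sets having odd intersection with some part.) -/
open Finset

/-- `A` is the vertex set of a copy of the hypergraph with vertex type `V` and edge set `EF`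
inside the hypergraph on `Fin n` with edge set `E`. -/
def IsCopy {n : ℕ} {V : Type} [Fintype V] [DecidableEq V] (E : Finset (Finset (Fin n)))
    (EF : Finset (Finset V)) (A : Finset (Fin n)) : Prop :=
  ∃ f : V ↪ Fin n, Finset.map f Finset.univ = A ∧ ∀ e ∈ EF, e.map f ∈ E

/-- The induced subhypergraph of `E` on `S` has an `F`-factor, where `F` has vertex type `V`
and edge set `EF`: there are pairwise vertex-disjoint copies of `F` covering exactly `S`. -/
def HasFactorOn {n : ℕ} {V : Type} [Fintype V] [DecidableEq V] (E : Finset (Finset (Fin n)))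
    (EF : Finset (Finset V)) (S : Finset (Fin n)) : Prop :=
  ∃ P : Finset (Finset (Fin n)), (∀ A ∈ P, IsCopy E EF A) ∧
    (P : Set (Finset (Fin n))).PairwiseDisjoint id ∧ P.biUnion id = S

/-- `x` is `(F, i, η)`-close to `y`. -/
def CloseTo {n : ℕ} {V : Type} [Fintype V] [DecidableEq V] (E : Finset (Finset (Fin n)))
    (EF : Finset (Finset V)) (i : ℕ) (η : ℝ) (x y : Fin n) : Prop :=
  η * (n : ℝ) ^ (i * Fintype.card V - 1) ≤
    (({S : Finset (Fin n) | S.card = i * Fintype.card V - 1 ∧ x ∉ S ∧ y ∉ S ∧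
      HasFactorOn E EF (insert x S) ∧ HasFactorOn E EF (insert y S)}).ncard : ℝ)

/-- `H` is `(F, i, η)`-closed. -/
def IsClosedGraph {n : ℕ} {V : Type} [Fintype V] [DecidableEq V] (E : Finset (Finset (Fin n)))
    (EF : Finset (Finset V)) (i : ℕ) (η : ℝ) : Prop :=
  ∀ x y : Fin n, x ≠ y → CloseTo E EF i η x y

/-- `Ñ_{F,i,η}(x)`: the set of vertices `(F, i, η)`-close to `x`. -/
def Ntilde {n : ℕ} {V : Type} [Fintype V] [DecidableEq V] (E : Finset (Finset (Fin n)))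
    (EF : Finset (Finset V)) (i : ℕ) (η : ℝ) (x : Fin n) : Set (Fin n) :=
  {y | CloseTo E EF i η x y}

/-- Degree of the set `T` in the `k`-graph with edge set `E`. -/
noncomputable def degOn {n : ℕ} (E : Finset (Finset (Fin n))) (k : ℕ) (T : Finset (Fin n)) : ℕ :=
  ({S : Finset (Fin n) | S.card = k - T.card ∧ Disjoint S T ∧ S ∪ T ∈ E}).ncard

/-- Edge set of the complete `k`-graph `K_t^k` on `Fin t`. -/
def cliqueEdges (t k : ℕ) : Finset (Finset (Fin t)) :=
  Finset.powersetCard k (Finset.univ : Finset (Fin t))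

/-- Edge set of the complete `k`-partite `k`-graph `K_k^k(m)` with parts of size `m`. -/
def multipartiteEdges (k m : ℕ) : Finset (Finset (Fin k × Fin m)) :=
  Finset.univ.filter (fun e : Finset (Fin k × Fin m) =>
    ∀ i : Fin k, (e.filter (fun v => v.1 = i)).card = 1)

lemma card_filter_val_lt (n a : ℕ) (h : a ≤ n) :
    ((univ : Finset (Fin n)).filter (fun v => v.val < a)).card = a := by
  have he : (univ : Finset (Fin n)).filter (fun v => v.val < a) =
      (univ : Finset (Fin a)).map (Fin.castLEEmb h) := by
    ext v
    simp only [mem_filter, mem_univ, true_and, mem_map, Fin.castLEEmb]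
    constructor
    · intro hv
      exact ⟨⟨v.val, hv⟩, rfl⟩
    · rintro ⟨w, rfl⟩
      exact w.2
  rw [he, card_map, card_univ, Fintype.card_fin]

/-- For even `k ≥ 4` there are `k`-graphs with minimum codegree at least `2n/3 - k`
and no `K_{k+1}^k`-factor. -/
theorem lower_bound_Kk_plus_one_even (k : ℕ) (hk : 4 ≤ k) (hke : Even k) :
    ∃ n₀ : ℕ, ∀ n : ℕ, n₀ ≤ n → (k + 1) ∣ n →
      ∃ E : Finset (Finset (Fin n)), (∀ e ∈ E, e.card = k) ∧
        (∀ T : Finset (Fin n), T.card = k - 1 →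
          2 * (n : ℝ) / 3 - (k : ℝ) ≤ (degOn E k T : ℝ)) ∧
        ¬ HasFactorOn E (cliqueEdges (k + 1) k) (Finset.univ : Finset (Fin n)) := by
  classical
  refine ⟨3 * k + 21, fun n hn _ => ?_⟩
  obtain ⟨t, ht⟩ := hke
  set m := n / 3 with hm
  have hmod : 3 * m + n % 3 = n := Nat.div_add_mod n 3
  have hr : n % 3 < 3 := Nat.mod_lt _ (by norm_num)
  have h1n : m + 1 ≤ n := by omega
  have h2n : 2 * m + 1 ≤ n := by omega
  set part : Fin n → Fin 3 :=
    fun v => if v.val < m + 1 then 0 else if v.val < 2 * m + 1 then 1 else 2 with hpart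
  have h3 : ∀ x : Fin 3, x = 0 ∨ x = 1 ∨ x = 2 := by decide
  have hp0 : ∀ v : Fin n, part v = 0 ↔ v.val < m + 1 := by
    intro v
    by_cases h1 : v.val < m + 1
    · simp only [hpart, if_pos h1]
      first
      | exact iff_of_true trivial h1
      | exact iff_of_true rfl h1
    · by_cases h2 : v.val < 2 * m + 1
      · simp only [hpart, if_neg h1, if_pos h2]; exact iff_of_false (by decide) h1
      · simp only [hpart, if_neg h1, if_neg h2]; exact iff_of_false (by decide) h1
  have hp1 : ∀ v : Fin n, part v = 1 ↔ (v.val < 2 * m + 1 ∧ ¬ v.val < m + 1) := by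
    intro v
    by_cases h1 : v.val < m + 1
    · simp only [hpart, if_pos h1]
      exact iff_of_false (by decide) (fun h => h.2 h1)
    · by_cases h2 : v.val < 2 * m + 1
      · simp only [hpart, if_neg h1, if_pos h2]
        first
        | exact iff_of_true trivial ⟨h2, h1⟩
        | exact iff_of_true rfl ⟨h2, h1⟩
      · simp only [hpart, if_neg h1, if_neg h2]
        exact iff_of_false (by decide) (fun h => h2 h.1)
  have hp2 : ∀ v : Fin n, part v = 2 ↔ ¬ v.val < 2 * m + 1 := by
    intro v
    by_cases h1 : v.val < m + 1
    · simp only [hpart, if_pos h1]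
      exact iff_of_false (by decide) (fun h => h (by omega))
    · by_cases h2 : v.val < 2 * m + 1
      · simp only [hpart, if_neg h1, if_pos h2]
        exact iff_of_false (by decide) (fun h => h h2)
      · simp only [hpart, if_neg h1, if_neg h2]
        first
        | exact iff_of_true trivial h2
        | exact iff_of_true rfl h2
  have hV0 : ((univ : Finset (Fin n)).filter fun v => part v = 0).card = m + 1 := by
    rw [filter_congr (fun v _ => hp0 v), card_filter_val_lt n (m + 1) h1n]
  have hV1 : ((univ : Finset (Fin n)).filter fun v => part v = 1).card = m := by
    have he : (univ : Finset (Fin n)).filter (fun v => part v = 1) =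
        ((univ : Finset (Fin n)).filter fun v => v.val < 2 * m + 1) \
          ((univ : Finset (Fin n)).filter fun v => v.val < m + 1) := by
      ext v
      simp only [mem_filter, mem_sdiff, mem_univ, true_and, hp1 v]
      try tauto
    have hsub : ((univ : Finset (Fin n)).filter fun v => v.val < m + 1) ⊆
        ((univ : Finset (Fin n)).filter fun v => v.val < 2 * m + 1) := by
      intro v hv
      simp only [mem_filter, mem_univ, true_and] at hv ⊢
      omega
    rw [he, card_sdiff_of_subset hsub, card_filter_val_lt n _ h2n, card_filter_val_lt n _ h1n]
    omega
  have hV2 : ((univ : Finset (Fin n)).filter fun v => part v = 2).card = n - (2 * m + 1) := by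
    have he : (univ : Finset (Fin n)).filter (fun v => part v = 2) =
        univ \ ((univ : Finset (Fin n)).filter fun v => v.val < 2 * m + 1) := by
      ext v
      simp only [mem_filter, mem_sdiff, mem_univ, true_and, hp2 v]
    rw [he, card_sdiff_of_subset (filter_subset _ _), card_univ, Fintype.card_fin,
      card_filter_val_lt n _ h2n]
  set E : Finset (Finset (Fin n)) := (Finset.powersetCard k (univ : Finset (Fin n))).filter
      (fun e => ∃ j : Fin 3, (e.filter fun v => part v = j).card % 2 = 1) with hE
  refine ⟨E, ?_, ?_, ?_⟩
  · intro e he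
    rw [hE, mem_filter] at he
    exact (Finset.mem_powersetCard.mp he.1).2
  · -- degree bound
    intro T hT
    have hfib : T.card = ∑ j : Fin 3, (T.filter fun v => part v = j).card :=
      card_eq_sum_card_fiberwise (f := part) (t := univ) (fun x _ => mem_univ _)
    rw [Fin.sum_univ_three] at hfib
    have hex : ∃ i : Fin 3, (T.filter fun v => part v = i).card % 2 = 1 := by
      by_contra hcon
      push_neg at hcon
      have e0 := hcon 0; have e1 := hcon 1; have e2 := hcon 2
      omega
    obtain ⟨i, hi⟩ := hex
    set C : Finset (Fin n) := ((univ : Finset (Fin n)).filter fun v => ¬ part v = i) \ T with hC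
    have hcompl : ((univ : Finset (Fin n)).filter fun v => ¬ part v = i).card =
        n - ((univ : Finset (Fin n)).filter fun v => part v = i).card := by
      have he : ((univ : Finset (Fin n)).filter fun v => ¬ part v = i) =
          univ \ ((univ : Finset (Fin n)).filter fun v => part v = i) := by
        ext v; simp
      rw [he, card_sdiff_of_subset (filter_subset _ _), card_univ, Fintype.card_fin]
    have hCcard : ((univ : Finset (Fin n)).filter fun v => ¬ part v = i).card - T.card ≤
        C.card := le_card_sdiff T _
    have hci : 3 * ((univ : Finset (Fin n)).filter fun v => part v = i).card ≤ n + 3 := by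
      rcases h3 i with rfl | rfl | rfl
      · rw [hV0]; omega
      · rw [hV1]; omega
      · rw [hV2]; omega
    have hmem : ∀ v ∈ C, ({v} : Finset (Fin n)) ∈
        {S : Finset (Fin n) | S.card = k - T.card ∧ Disjoint S T ∧ S ∪ T ∈ E} := by
      intro v hv
      rw [hC, mem_sdiff, mem_filter] at hv
      obtain ⟨⟨-, hvi⟩, hvT⟩ := hv
      simp only [Set.mem_setOf_eq]
      refine ⟨by rw [card_singleton, hT]; omega, Finset.disjoint_singleton_left.mpr hvT, ?_⟩
      rw [hE, mem_filter]
      constructor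
      · rw [Finset.mem_powersetCard]
        refine ⟨subset_univ _, ?_⟩
        rw [← Finset.insert_eq, card_insert_of_notMem hvT, hT]
        omega
      · exact ⟨i, by rw [← Finset.insert_eq, filter_insert, if_neg hvi]; exact hi⟩
    have hdeg : C.card ≤ degOn E k T := by
      unfold degOn
      calc C.card = (C.image fun v => ({v} : Finset (Fin n))).card :=
            (card_image_of_injective _ Finset.singleton_injective).symm
        _ = ((C.image fun v => ({v} : Finset (Fin n))) :
              Set (Finset (Fin n))).ncard := (Set.ncard_coe_finset _).symm
        _ ≤ _ := by
            refine Set.ncard_le_ncard ?_ (Set.toFinite _)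
            intro S hS
            simp only [coe_image, Set.mem_image, mem_coe] at hS
            obtain ⟨v, hv, rfl⟩ := hS
            exact hmem v hv
    have hfin : 2 * n ≤ 3 * degOn E k T + 3 * k := by omega
    have hcast : (2 * n : ℝ) ≤ 3 * (degOn E k T : ℝ) + 3 * k := by exact_mod_cast hfin
    linarith
  · -- no factor
    rintro ⟨P, hcopy, hdisj, hcover⟩
    have hodd : ∀ A ∈ P, ∀ j : Fin 3, (A.filter fun v => part v = j).card % 2 = 1 := by
      intro A hA
      obtain ⟨f, hf1, hf2⟩ := hcopy A hA
      have hAcard : A.card = k + 1 := by rw [← hf1, card_map, card_univ, Fintype.card_fin]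
      have hedge : ∀ v ∈ A, A.erase v ∈ E := by
        intro v hv
        rw [← hf1] at hv
        obtain ⟨w, -, rfl⟩ := Finset.mem_map.mp hv
        have h1 : ((univ : Finset (Fin (k + 1))).erase w) ∈ cliqueEdges (k + 1) k := by
          refine Finset.mem_powersetCard.mpr ⟨subset_univ _, ?_⟩
          rw [card_erase_of_mem (mem_univ _), card_univ, Fintype.card_fin]
          omega
        have h2 := hf2 _ h1
        rwa [Finset.map_erase, hf1] at h2
      have hfib : A.card = ∑ j : Fin 3, (A.filter fun v => part v = j).card :=
        card_eq_sum_card_fiberwise (f := part) (t := univ) (fun x _ => mem_univ _)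
      rw [Fin.sum_univ_three, hAcard] at hfib
      have hkey : ∀ i : Fin 3, (A.filter fun v => part v = i).card % 2 = 1 →
          ∃ j : Fin 3, j ≠ i ∧ (A.filter fun v => part v = j).card % 2 = 1 := by
        intro i hi
        have hne : (A.filter fun v => part v = i).Nonempty := card_pos.mp (by omega)
        obtain ⟨v, hv⟩ := hne
        have hvA : v ∈ A := (mem_filter.mp hv).1
        have hvi : part v = i := (mem_filter.mp hv).2
        have hEv := hedge v hvA
        rw [hE, mem_filter] at hEv
        obtain ⟨j, hj⟩ := hEv.2
        rw [filter_erase] at hj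
        by_cases h : j = i
        · subst h
          rw [card_erase_of_mem hv] at hj
          exact absurd hj (by omega)
        · refine ⟨j, h, ?_⟩
          rwa [erase_eq_of_notMem
            (fun hmem => h (by rw [← (mem_filter.mp hmem).2]; exact hvi))] at hj
      have hex : ∃ i : Fin 3, (A.filter fun v => part v = i).card % 2 = 1 := by
        by_contra hcon
        push_neg at hcon
        have e0 := hcon 0; have e1 := hcon 1; have e2 := hcon 2
        omega
      obtain ⟨i, hi⟩ := hex
      obtain ⟨j, hji, hj⟩ := hkey i hi
      intro mx
      rcases h3 i with rfl | rfl | rfl <;> rcases h3 j with rfl | rfl | rfl <;>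
        rcases h3 mx with rfl | rfl | rfl <;>
        first | exact absurd rfl hji | omega
    have hVP : ∀ j : Fin 3,
        ((univ : Finset (Fin n)).filter fun v => part v = j).card % 2 = P.card % 2 := by
      intro j
      have hU : (univ : Finset (Fin n)).filter (fun v => part v = j) =
          P.biUnion (fun A => A.filter fun v => part v = j) := by
        rw [← hcover]
        exact filter_biUnion P id _
      have hpd : ∀ A ∈ P, ∀ B ∈ P, A ≠ B →
          Disjoint (A.filter fun v => part v = j) (B.filter fun v => part v = j) :=
        fun A hA B hB hne =>
          disjoint_filter_filter (hdisj (mem_coe.mpr hA) (mem_coe.mpr hB) hne)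
      rw [hU, card_biUnion hpd]
      rw [Finset.sum_nat_mod]
      have hcong : ∑ A ∈ P, (A.filter fun v => part v = j).card % 2 = ∑ _A ∈ P, 1 :=
        Finset.sum_congr rfl (fun A hA => hodd A hA j)
      rw [hcong, Finset.sum_const, smul_eq_mul, mul_one]
    have e0 := hVP 0
    have e1 := hVP 1
    rw [hV0] at e0
    rw [hV1] at e1
    omega
end

section
/- Let k ≥ 2 and let i₁, i₂, t be positive integers and η₁, η₂, ε > 0 constants. There exist η > 0 and an integer n₀, depending only on k, i₁, i₂, t, η₁, η₂ and ε, such that for every k-graph F on t vertices, every k-graph H on n ≥ n₀ vertices and all distinct vertices x, y ∈ V(H): if |Ñ_{F,i₁,η₁}(x) ∩ Ñ_{F,i₂,η₂}(y)| ≥ ε·n, then x is (F, i₁+i₂, η)-close to y. -/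
open Finset

/-!
Write `mⱼ = iⱼ t - 1`. For each of the at least `εn/2` vertices `z ∉ {x, y}` close to both `x` and
`y`, choose a witness `S₁` of `x ~ z` avoiding `y` (about `η₁ n ^ m₁` choices) and then a witness
`S₂` of `y ~ z` avoiding `x` and `S₁` (about `η₂ n ^ m₂` choices): only `O(n ^ (m - 1))` of the
`m`-sets meet a given bounded set. The set `S = {z} ∪ S₁ ∪ S₂` witnesses `x ~ y`, because
`{x} ∪ S = ({x} ∪ S₁) ∪ ({z} ∪ S₂)` and `{y} ∪ S = ({y} ∪ S₂) ∪ ({z} ∪ S₁)` are disjoint unions of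
sets with `F`-factors. Since `z` and `S₁` determine `S₂ = S \ ({z} ∪ S₁)`, each `S` arises from at
most `|S| 2 ^ |S|` triples, which leaves `≳ ε η₁ η₂ n ^ (m₁ + m₂ + 1)` witnesses of `x ~ y`.
-/

namespace Finset

variable {α : Type*} [DecidableEq α]

lemma mul_le_card_sigma {ι : Type*} {κ : ι → Type*} (s : Finset ι) (t : ∀ i, Finset (κ i))
    {a : ℝ} (h : ∀ i ∈ s, a ≤ #(t i)) : #s * a ≤ #(s.sigma t) := by
  rw [card_sigma, Nat.cast_sum]
  simpa using card_nsmul_le_sum s (fun i => (#(t i) : ℝ)) a h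

lemma card_filter_insert_union_eq_le {T : Finset (Σ _ : α, Σ _ : Finset α, Finset α)}
    (hT : ∀ p ∈ T, p.1 ∉ p.2.2 ∧ Disjoint p.2.1 p.2.2) (S : Finset α) :
    #{p ∈ T | insert p.1 (p.2.1 ∪ p.2.2) = S} ≤ #S * 2 ^ #S := by
  have hS₂ : ∀ p ∈ T, insert p.1 (p.2.1 ∪ p.2.2) = S → p.2.2 = S \ insert p.1 p.2.1 := by
    rintro ⟨z, S₁, S₂⟩ hp rfl
    obtain ⟨hz, hd⟩ := hT _ hp
    ext a
    simp only [mem_sdiff, mem_insert, mem_union]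
    constructor
    · intro ha
      exact ⟨Or.inr (Or.inr ha), fun h => h.elim (fun h => hz (h ▸ ha))
        fun h => disjoint_left.1 hd h ha⟩
    · tauto
  calc #{p ∈ T | insert p.1 (p.2.1 ∪ p.2.2) = S}
      ≤ #(S ×ˢ S.powerset) := by
        refine card_le_card_of_injOn (fun p => (p.1, p.2.1)) (fun p hp => ?_) ?_
        · obtain ⟨-, rfl⟩ := mem_filter.1 hp
          simp only [coe_product, Set.mem_prod, mem_coe, mem_insert_self, mem_powerset, true_and]
          exact subset_union_left.trans (subset_insert _ _)
        · rintro ⟨z, S₁, S₂⟩ hp ⟨z', S₁', S₂'⟩ hp' h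
          obtain ⟨rfl, rfl⟩ := Prod.mk.inj h
          obtain ⟨hp, hpS⟩ := mem_filter.1 hp
          obtain ⟨hp', hpS'⟩ := mem_filter.1 hp'
          have h₂ := hS₂ _ hp hpS
          have h₂' := hS₂ _ hp' hpS'
          dsimp only at h₂ h₂' ⊢
          rw [h₂, h₂']
    _ = #S * 2 ^ #S := by rw [card_product, card_powerset]

variable [Fintype α]

lemma card_mul_card_filter_mem_le (v : α) (m : ℕ) :
    Fintype.card α * #{S : Finset α | S.card = m ∧ v ∈ S} ≤ m * Fintype.card α ^ m := by
  cases m with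
  | zero => simp [card_eq_zero]
  | succ m =>
    obtain ⟨N, hN⟩ := Nat.exists_eq_succ_of_ne_zero (Fintype.card_pos_iff.2 ⟨v⟩).ne'
    have herase : #{S : Finset α | S.card = m + 1 ∧ v ∈ S} ≤ #(powersetCard m (univ.erase v)) := by
      refine card_le_card_of_injOn (·.erase v) (fun S hS => ?_) (fun S hS T hT hST => ?_)
      · simp only [coe_filter, mem_univ, true_and, Set.mem_ofPred_eq] at hS
        simp [mem_powersetCard, card_erase_of_mem hS.2, hS.1, erase_subset_erase]
      · simp only [coe_filter, mem_univ, true_and, Set.mem_ofPred_eq] at hS hT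
        rw [← insert_erase hS.2, ← insert_erase hT.2]
        exact congrArg (insert v) hST
    rw [card_powersetCard, card_erase_of_mem (mem_univ v), card_univ, hN] at herase
    calc Fintype.card α * #{S : Finset α | S.card = m + 1 ∧ v ∈ S}
        ≤ (N + 1) * N.choose m := by rw [hN]; exact Nat.mul_le_mul_left _ herase
      _ = (N + 1).choose (m + 1) * (m + 1) := Nat.add_one_mul_choose_eq N m
      _ ≤ (m + 1) * Fintype.card α ^ (m + 1) := by
        rw [mul_comm, hN]
        exact Nat.mul_le_mul_left _ (Nat.choose_le_pow _ _)

lemma card_mul_card_filter_not_disjoint_le {m : ℕ} {𝒜 : Finset (Finset α)}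
    (h𝒜 : ∀ S ∈ 𝒜, S.card = m) (W : Finset α) :
    Fintype.card α * #{S ∈ 𝒜 | ¬Disjoint S W} ≤ #W * (m * Fintype.card α ^ m) := by
  have hsub : {S ∈ 𝒜 | ¬Disjoint S W} ⊆ W.biUnion fun v => {S : Finset α | S.card = m ∧ v ∈ S} := by
    intro S hS
    obtain ⟨hS𝒜, hSW⟩ := mem_filter.1 hS
    obtain ⟨v, hvS, hvW⟩ := not_disjoint_iff.1 hSW
    exact mem_biUnion.2 ⟨v, hvW, mem_filter.2 ⟨mem_univ _, h𝒜 S hS𝒜, hvS⟩⟩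
  calc Fintype.card α * #{S ∈ 𝒜 | ¬Disjoint S W}
      ≤ Fintype.card α * ∑ v ∈ W, #{S : Finset α | S.card = m ∧ v ∈ S} :=
        Nat.mul_le_mul_left _ ((card_le_card hsub).trans card_biUnion_le)
    _ ≤ ∑ _v ∈ W, m * Fintype.card α ^ m := by
        rw [mul_sum]
        exact sum_le_sum fun v _ => card_mul_card_filter_mem_le v m
    _ = #W * (m * Fintype.card α ^ m) := by rw [sum_const, smul_eq_mul]

lemma le_card_filter_disjoint {m : ℕ} {𝒜 : Finset (Finset α)} (h𝒜 : ∀ S ∈ 𝒜, S.card = m)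
    (W : Finset α) {η : ℝ} (hα : 0 < Fintype.card α)
    (hdense : η * (Fintype.card α : ℝ) ^ m ≤ #𝒜) (hW : 2 * #W * m ≤ η * Fintype.card α) :
    η / 2 * (Fintype.card α : ℝ) ^ m ≤ #{S ∈ 𝒜 | Disjoint S W} := by
  have hN : (0 : ℝ) < Fintype.card α := by exact_mod_cast hα
  have hbad : (Fintype.card α : ℝ) * #{S ∈ 𝒜 | ¬Disjoint S W} ≤
      #W * (m * (Fintype.card α : ℝ) ^ m) := by
    exact_mod_cast card_mul_card_filter_not_disjoint_le h𝒜 W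
  have hsplit : (#{S ∈ 𝒜 | Disjoint S W} : ℝ) + #{S ∈ 𝒜 | ¬Disjoint S W} = #𝒜 := by
    exact_mod_cast card_filter_add_card_filter_not _
  have : (Fintype.card α : ℝ) * (2 * #{S ∈ 𝒜 | ¬Disjoint S W}) ≤
      Fintype.card α * (η * (Fintype.card α : ℝ) ^ m) := by
    nlinarith [pow_nonneg hN.le m]
  nlinarith [le_of_mul_le_mul_left this hN]

end Finset

section Hypergraph

variable {n : ℕ} {V : Type} [Fintype V] [DecidableEq V] {E : Finset (Finset (Fin n))}
  {EF : Finset (Finset V)}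

lemma HasFactorOn.union {A B : Finset (Fin n)} (hA : HasFactorOn E EF A)
    (hB : HasFactorOn E EF B) (hAB : Disjoint A B) : HasFactorOn E EF (A ∪ B) := by
  obtain ⟨P, hPcopy, hPdisj, rfl⟩ := hA
  obtain ⟨Q, hQcopy, hQdisj, rfl⟩ := hB
  refine ⟨P ∪ Q, fun C hC => (mem_union.1 hC).elim (hPcopy C) (hQcopy C), ?_, union_biUnion⟩
  rw [coe_union]
  refine hPdisj.union hQdisj fun C hC D hD _ => hAB.mono ?_ ?_
  · exact subset_biUnion_of_mem id hC
  · exact subset_biUnion_of_mem id hD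

open Classical in
noncomputable def closeWitnesses (E : Finset (Finset (Fin n))) (EF : Finset (Finset V)) (m : ℕ)
    (x y : Fin n) : Finset (Finset (Fin n)) :=
  {S | S.card = m ∧ x ∉ S ∧ y ∉ S ∧ HasFactorOn E EF (insert x S) ∧
    HasFactorOn E EF (insert y S)}

lemma card_of_mem_closeWitnesses {m : ℕ} {x y : Fin n} {S : Finset (Fin n)}
    (hS : S ∈ closeWitnesses E EF m x y) : S.card = m := by
  simp only [closeWitnesses, mem_filter] at hS
  exact hS.2.1

lemma notMem_of_mem_closeWitnesses_right {m : ℕ} {x y : Fin n} {S : Finset (Fin n)}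
    (hS : S ∈ closeWitnesses E EF m x y) : y ∉ S := by
  simp only [closeWitnesses, mem_filter] at hS
  exact hS.2.2.2.1

lemma closeTo_iff_le_card_closeWitnesses {i : ℕ} {η : ℝ} {x y : Fin n} :
    CloseTo E EF i η x y ↔
      η * (n : ℝ) ^ (i * Fintype.card V - 1) ≤
        #(closeWitnesses E EF (i * Fintype.card V - 1) x y) := by
  rw [CloseTo, ← Set.ncard_coe_finset, closeWitnesses]
  simp

lemma insert_union_mem_closeWitnesses {m₁ m₂ : ℕ} {x y z : Fin n} {S₁ S₂ : Finset (Fin n)}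
    (hzx : z ≠ x) (hzy : z ≠ y) (hS₁ : S₁ ∈ closeWitnesses E EF m₁ x z)
    (hS₂ : S₂ ∈ closeWitnesses E EF m₂ y z) (hyS₁ : y ∉ S₁) (hS₂S₁ : Disjoint S₂ (insert x S₁)) :
    insert z (S₁ ∪ S₂) ∈ closeWitnesses E EF (m₁ + m₂ + 1) x y := by
  simp only [closeWitnesses, mem_filter, mem_univ, true_and] at hS₁ hS₂ ⊢
  obtain ⟨hc₁, hxS₁, hzS₁, hx₁, hz₁⟩ := hS₁
  obtain ⟨hc₂, hyS₂, hzS₂, hy₂, hz₂⟩ := hS₂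
  obtain ⟨hxS₂, hd⟩ := disjoint_insert_right.1 hS₂S₁
  refine ⟨?_, ?_, ?_, ?_, ?_⟩
  · rw [card_insert_of_notMem (by simp [hzS₁, hzS₂]), card_union_of_disjoint hd.symm, hc₁, hc₂]
  · simp [hzx.symm, hxS₁, hxS₂]
  · simp [hzy.symm, hyS₁, hyS₂]
  · rw [show insert x (insert z (S₁ ∪ S₂)) = insert x S₁ ∪ insert z S₂ by
      ext; simp only [mem_insert, mem_union]; tauto]
    exact hx₁.union hz₂ (by simp [hzx, hxS₂, hzS₁, hd.symm])
  · rw [show insert y (insert z (S₁ ∪ S₂)) = insert y S₂ ∪ insert z S₁ by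
      ext; simp only [mem_insert, mem_union]; tauto]
    exact hy₂.union hz₁ (by simp [hzy, hyS₁, hzS₂, hd])

lemma le_card_closeWitnesses_add {m₁ m₂ : ℕ} {η₁ η₂ : ℝ} {x y : Fin n} {Z : Finset (Fin n)}
    (hZ : ∀ z ∈ Z, z ≠ x ∧ z ≠ y)
    (h₁ : ∀ z ∈ Z, η₁ * (n : ℝ) ^ m₁ ≤ #(closeWitnesses E EF m₁ x z))
    (h₂ : ∀ z ∈ Z, η₂ * (n : ℝ) ^ m₂ ≤ #(closeWitnesses E EF m₂ y z))
    (hη₂ : 0 ≤ η₂) (hn : 0 < n) (hn₁ : 2 * m₁ ≤ η₁ * n) (hn₂ : 2 * (m₁ + 1) * m₂ ≤ η₂ * n) :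
    #Z * ((η₁ / 2 * (n : ℝ) ^ m₁) * (η₂ / 2 * (n : ℝ) ^ m₂)) ≤
      ((m₁ + m₂ + 1) * 2 ^ (m₁ + m₂ + 1) : ℕ) * #(closeWitnesses E EF (m₁ + m₂ + 1) x y) := by
  have hcard : Fintype.card (Fin n) = n := Fintype.card_fin n
  have hA : ∀ z ∈ Z, η₁ / 2 * (n : ℝ) ^ m₁ ≤ #{S ∈ closeWitnesses E EF m₁ x z | Disjoint S {y}} :=
    fun z hz => by
      have := le_card_filter_disjoint (fun S => card_of_mem_closeWitnesses) {y}
        (by rwa [hcard]) (by rw [hcard]; exact h₁ z hz)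
        (by rw [hcard, card_singleton]; simpa using hn₁)
      rwa [hcard] at this
  have hB : ∀ z ∈ Z, ∀ S₁ ∈ closeWitnesses E EF m₁ x z, η₂ / 2 * (n : ℝ) ^ m₂ ≤
      #{S ∈ closeWitnesses E EF m₂ y z | Disjoint S (insert x S₁)} := fun z hz S₁ hS₁ => by
    have hW : (#(insert x S₁) : ℝ) ≤ m₁ + 1 := by
      rw [← card_of_mem_closeWitnesses hS₁]
      exact_mod_cast card_insert_le x S₁
    have := le_card_filter_disjoint (fun S => card_of_mem_closeWitnesses) (insert x S₁)
      (by rwa [hcard]) (by rw [hcard]; exact h₂ z hz)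
      (by rw [hcard]; nlinarith [m₂.cast_nonneg (α := ℝ)])
    rwa [hcard] at this
  set T := Z.sigma fun z => {S ∈ closeWitnesses E EF m₁ x z | Disjoint S {y}}.sigma
    fun S₁ => {S ∈ closeWitnesses E EF m₂ y z | Disjoint S (insert x S₁)}
  have hT : #Z * ((η₁ / 2 * (n : ℝ) ^ m₁) * (η₂ / 2 * (n : ℝ) ^ m₂)) ≤ #T :=
    mul_le_card_sigma _ _ fun z hz =>
      (mul_le_mul_of_nonneg_right (hA z hz) (by positivity)).trans
        (mul_le_card_sigma _ _ fun S₁ hS₁ => hB z hz S₁ (mem_filter.1 hS₁).1)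
  have hglue : ∀ p ∈ T, insert p.1 (p.2.1 ∪ p.2.2) ∈ closeWitnesses E EF (m₁ + m₂ + 1) x y := by
    rintro ⟨z, S₁, S₂⟩ hp
    simp only [T, mem_sigma, mem_filter, disjoint_singleton_right] at hp
    obtain ⟨hz, ⟨hS₁, hyS₁⟩, hS₂, hS₂S₁⟩ := hp
    exact insert_union_mem_closeWitnesses (hZ z hz).1 (hZ z hz).2 hS₁ hS₂ hyS₁ hS₂S₁
  have hfiber : ∀ S ∈ closeWitnesses E EF (m₁ + m₂ + 1) x y,
      #{p ∈ T | insert p.1 (p.2.1 ∪ p.2.2) = S} ≤ (m₁ + m₂ + 1) * 2 ^ (m₁ + m₂ + 1) := by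
    intro S hS
    rw [← card_of_mem_closeWitnesses hS]
    refine card_filter_insert_union_eq_le (fun p hp => ?_) S
    simp only [T, mem_sigma, mem_filter, disjoint_insert_right] at hp
    obtain ⟨-, -, hS₂, -, hd⟩ := hp
    exact ⟨notMem_of_mem_closeWitnesses_right hS₂, hd.symm⟩
  calc _ ≤ (#T : ℝ) := hT
    _ ≤ _ := by exact_mod_cast card_le_mul_card_image_of_maps_to hglue _ hfiber

lemma closeTo_add_of_le_ncard_inter {i₁ i₂ m₁ m₂ : ℕ} {η₁ η₂ ε : ℝ} {x y : Fin n}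
    (hm₁ : i₁ * Fintype.card V = m₁ + 1) (hm₂ : i₂ * Fintype.card V = m₂ + 1)
    (hη₁ : 0 ≤ η₁) (hη₂ : 0 ≤ η₂) (hn : 0 < n) (hεn : 4 ≤ ε * n) (hn₁ : 2 * m₁ ≤ η₁ * n)
    (hn₂ : 2 * (m₁ + 1) * m₂ ≤ η₂ * n)
    (hcommon : ε * n ≤ (Ntilde E EF i₁ η₁ x ∩ Ntilde E EF i₂ η₂ y).ncard) :
    CloseTo E EF (i₁ + i₂) (ε * η₁ * η₂ / (8 * ((m₁ + m₂ + 1) * 2 ^ (m₁ + m₂ + 1) : ℕ))) x y := by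
  classical
  set C : ℕ := (m₁ + m₂ + 1) * 2 ^ (m₁ + m₂ + 1)
  set Z := (Ntilde E EF i₁ η₁ x ∩ Ntilde E EF i₂ η₂ y).toFinset \ {x, y}
  have hZ : ε * n / 2 ≤ #Z := by
    have : (Ntilde E EF i₁ η₁ x ∩ Ntilde E EF i₂ η₂ y).ncard ≤ #Z + 2 := by
      rw [Set.ncard_eq_toFinset_card']
      exact card_le_card_sdiff_add_card.trans (Nat.add_le_add_left card_le_two _)
    have : ((Ntilde E EF i₁ η₁ x ∩ Ntilde E EF i₂ η₂ y).ncard : ℝ) ≤ #Z + 2 := by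
      exact_mod_cast this
    linarith
  have hmemZ : ∀ z ∈ Z, (CloseTo E EF i₁ η₁ x z ∧ CloseTo E EF i₂ η₂ y z) ∧ z ≠ x ∧ z ≠ y := by
    intro z hz
    simp only [Z, mem_sdiff, Set.mem_toFinset, Set.mem_inter_iff, mem_insert, mem_singleton,
      not_or] at hz
    exact hz
  have hcount := le_card_closeWitnesses_add (fun z hz => (hmemZ z hz).2)
    (fun z hz => by simpa [closeTo_iff_le_card_closeWitnesses, hm₁] using (hmemZ z hz).1.1)
    (fun z hz => by simpa [closeTo_iff_le_card_closeWitnesses, hm₂] using (hmemZ z hz).1.2)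
    hη₂ hn hn₁ hn₂
  rw [closeTo_iff_le_card_closeWitnesses, add_mul, hm₁, hm₂,
    show m₁ + 1 + (m₂ + 1) - 1 = m₁ + m₂ + 1 by omega]
  have hC : (0 : ℝ) < C := by positivity
  calc ε * η₁ * η₂ / (8 * C) * (n : ℝ) ^ (m₁ + m₂ + 1)
      = ε * n / 2 * ((η₁ / 2 * (n : ℝ) ^ m₁) * (η₂ / 2 * (n : ℝ) ^ m₂)) / C := by
        field_simp
        ring
    _ ≤ #Z * ((η₁ / 2 * (n : ℝ) ^ m₁) * (η₂ / 2 * (n : ℝ) ^ m₂)) / C := by gcongr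
    _ ≤ C * #(closeWitnesses E EF (m₁ + m₂ + 1) x y) / C :=
        div_le_div_of_nonneg_right hcount hC.le
    _ = #(closeWitnesses E EF (m₁ + m₂ + 1) x y) := by field_simp

end Hypergraph

theorem close_additive_general (k i₁ i₂ t : ℕ) (η₁ η₂ ε : ℝ)
    (hi₁ : 1 ≤ i₁) (hi₂ : 1 ≤ i₂) (ht : 1 ≤ t)
    (hη₁ : 0 < η₁) (hη₂ : 0 < η₂) (hε : 0 < ε) :
    ∃ η : ℝ, 0 < η ∧ ∃ n₀ : ℕ, ∀ n : ℕ, n₀ ≤ n →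
      ∀ EF : Finset (Finset (Fin t)), (∀ e ∈ EF, e.card = k) →
      ∀ E : Finset (Finset (Fin n)), (∀ e ∈ E, e.card = k) →
      ∀ x y : Fin n, x ≠ y →
      ε * (n : ℝ) ≤ ((Ntilde E EF i₁ η₁ x ∩ Ntilde E EF i₂ η₂ y).ncard : ℝ) →
      CloseTo E EF (i₁ + i₂) η x y := by
  obtain ⟨m₁, hm₁⟩ : ∃ m, i₁ * t = m + 1 := ⟨i₁ * t - 1, by have := Nat.mul_le_mul hi₁ ht; omega⟩
  obtain ⟨m₂, hm₂⟩ : ∃ m, i₂ * t = m + 1 := ⟨i₂ * t - 1, by have := Nat.mul_le_mul hi₂ ht; omega⟩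
  have hlin {c : ℝ} (hc : 0 < c) (b : ℝ) : ∀ᶠ n : ℕ in Filter.atTop, b ≤ c * n :=
    (tendsto_natCast_atTop_atTop.const_mul_atTop hc).eventually_ge_atTop b
  obtain ⟨n₀, hn₀⟩ := Filter.eventually_atTop.1 <| (Filter.eventually_gt_atTop 0).and <|
    (hlin hε 4).and <| (hlin hη₁ (2 * m₁)).and (hlin hη₂ (2 * (m₁ + 1) * m₂))
  refine ⟨ε * η₁ * η₂ / (8 * ((m₁ + m₂ + 1) * 2 ^ (m₁ + m₂ + 1) : ℕ)), by positivity, n₀,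
    fun n hn EF _ E _ x y _ hcommon => ?_⟩
  obtain ⟨hn, hεn, hn₁, hn₂⟩ := hn₀ n hn
  exact closeTo_add_of_le_ncard_inter (by rwa [Fintype.card_fin]) (by rwa [Fintype.card_fin])
    hη₁.le hη₂.le hn hεn hn₁ hn₂ hcommon

/-- Additivity of closeness: if the closed neighbourhoods of `x` and `y` have large
intersection, then `x` is `(F, i₁+i₂, η)`-close to `y`. -/
theorem close_additive (k i₁ i₂ t : ℕ) (η₁ η₂ ε : ℝ)
    (hk : 2 ≤ k) (hi₁ : 1 ≤ i₁) (hi₂ : 1 ≤ i₂) (ht : 1 ≤ t)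
    (hη₁ : 0 < η₁) (hη₂ : 0 < η₂) (hε : 0 < ε) :
    ∃ η : ℝ, 0 < η ∧ ∃ n₀ : ℕ, ∀ n : ℕ, n₀ ≤ n →
      ∀ EF : Finset (Finset (Fin t)), (∀ e ∈ EF, e.card = k) →
      ∀ E : Finset (Finset (Fin n)), (∀ e ∈ E, e.card = k) →
      ∀ x y : Fin n, x ≠ y →
      ε * (n : ℝ) ≤ ((Ntilde E EF i₁ η₁ x ∩ Ntilde E EF i₂ η₂ y).ncard : ℝ) →
      CloseTo E EF (i₁ + i₂) η x y :=
  close_additive_general k i₁ i₂ t η₁ η₂ ε hi₁ hi₂ ht hη₁ hη₂ hε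
end

section
/- Let k ≥ 2 and let i₁, i₂, t be positive integers and η₁, η₂, ε > 0 constants. There exist η > 0 and an integer n₀, depending only on k, i₁, i₂, t, η₁, η₂ and ε, such that for every k-graph F on t vertices, every k-graph H on n ≥ n₀ vertices and all distinct vertices x, y ∈ V(H): if y is (F, i₁, η₁)-close to x and |Ñ_{F,i₂,η₂}(x)| ≥ ε·n, then x is (F, i₁+i₂, η)-close to y. -/
open Finset

/-! Double counting. Take an `(i₁t-1)`-set `S₁` witnessing that `x` and `y` are close, a vertex
`z ∉ S₁ ∪ {x, y}` close to `x`, and an `(i₂t-1)`-set `S₂` witnessing that `x` and `z` are close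
and avoiding `S₁ ∪ {x, y}`. Then `T = S₁ ∪ {z} ∪ S₂` witnesses the `(F, i₁+i₂)`-closeness of `x`
and `y`, since `T ∪ {x}` splits into `S₁ ∪ {x}` and `S₂ ∪ {z}`, and likewise for `y`. Only an
`O(1/n)` fraction of the witnesses `S₂` meet the `O(1)`-set `S₁ ∪ {x, y}`, so there are
`Ω(n^(i₁t-1) · n · n^(i₂t-1))` triples, and each `T` comes from at most `2^|T| |T|` of them
because `S₁ ⊆ T` and `z ∈ T` determine `S₂`. -/

theorem HasFactorOn.union_s10 {n : ℕ} {V : Type} [Fintype V] [DecidableEq V]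
    {E : Finset (Finset (Fin n))} {EF : Finset (Finset V)} {S T : Finset (Fin n)}
    (hS : HasFactorOn E EF S) (hT : HasFactorOn E EF T) (hST : Disjoint S T) :
    HasFactorOn E EF (S ∪ T) := by
  obtain ⟨P, hPcopy, hPdisj, rfl⟩ := hS
  obtain ⟨Q, hQcopy, hQdisj, rfl⟩ := hT
  refine ⟨P ∪ Q, fun A hA => (mem_union.1 hA).elim (hPcopy A) (hQcopy A), ?_, union_biUnion⟩
  rw [coe_union, Set.pairwiseDisjoint_union]
  refine ⟨hPdisj, hQdisj, fun A hA B hB _ => hST.mono ?_ ?_⟩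
  exacts [subset_biUnion_of_mem id hA, subset_biUnion_of_mem id hB]

theorem Finset.mul_le_card_sigma_s10 {ι : Type*} {σ : ι → Type*} (s : Finset ι)
    (t : ∀ i, Finset (σ i)) {a b : ℝ} (hb : 0 ≤ b) (hs : a ≤ #s)
    (ht : ∀ i ∈ s, b ≤ #(t i)) : a * b ≤ #(s.sigma t) :=
  calc a * b ≤ #s * b := mul_le_mul_of_nonneg_right hs hb
    _ ≤ ∑ i ∈ s, (#(t i) : ℝ) := by rw [← nsmul_eq_mul]; exact card_nsmul_le_sum _ _ _ ht
    _ = #(s.sigma t) := by rw [card_sigma]; push_cast; rfl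

section Counting

variable {α : Type*} [Fintype α] [DecidableEq α]

-- Multiplied by `|α|` so that it also covers `r = 0`, where no member contains `v`.
theorem card_filter_mem_mul_card_le_pow {C : Finset (Finset α)} {r : ℕ}
    (hC : ∀ S ∈ C, #S = r) (v : α) :
    #{S ∈ C | v ∈ S} * Fintype.card α ≤ Fintype.card α ^ r := by
  cases r with
  | zero =>
    have : {S ∈ C | v ∈ S} = ∅ :=
      filter_eq_empty_iff.2 fun S hS hv => by simp [card_eq_zero.1 (hC S hS)] at hv
    simp [this]
  | succ r =>
    rw [pow_succ]
    refine Nat.mul_le_mul_right _ ((card_le_card_of_injOn (fun S => S.erase v)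
      (t := powersetCard r univ) ?_ ?_).trans ?_)
    · intro S hS
      simp only [coe_filter, Set.mem_ofPred_eq] at hS
      simp [card_erase_of_mem hS.2, hC S hS.1]
    · intro S hS T hT
      exact erase_injOn' v (mem_filter.1 hS).2 (mem_filter.1 hT).2
    · rw [card_powersetCard, card_univ]
      exact Nat.choose_le_pow _ _

theorem card_mul_card_le_card_filter_disjoint_add {C : Finset (Finset α)} {r : ℕ}
    (hC : ∀ S ∈ C, #S = r) (B : Finset α) :
    #C * Fintype.card α ≤
      #{S ∈ C | Disjoint S B} * Fintype.card α + #B * Fintype.card α ^ r := by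
  have hmeet : #{S ∈ C | ¬Disjoint S B} ≤ ∑ v ∈ B, #{S ∈ C | v ∈ S} := by
    refine (card_le_card fun S hS => ?_).trans card_biUnion_le
    obtain ⟨hSC, hSB⟩ := mem_filter.1 hS
    obtain ⟨v, hvS, hvB⟩ := not_disjoint_iff.1 hSB
    exact mem_biUnion.2 ⟨v, hvB, mem_filter.2 ⟨hSC, hvS⟩⟩
  calc #C * Fintype.card α
      = #{S ∈ C | Disjoint S B} * Fintype.card α
        + #{S ∈ C | ¬Disjoint S B} * Fintype.card α := by
        rw [← add_mul, card_filter_add_card_filter_not]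
    _ ≤ _ := by
        refine Nat.add_le_add_left ((Nat.mul_le_mul_right _ hmeet).trans ?_) _
        rw [sum_mul, ← smul_eq_mul, ← sum_const]
        exact sum_le_sum fun v _ => card_filter_mem_mul_card_le_pow hC v

theorem half_mul_pow_le_card_filter_disjoint {C : Finset (Finset α)} {r : ℕ}
    (hC : ∀ S ∈ C, #S = r) {B : Finset α} {c : ℝ} (hα : 0 < Fintype.card α)
    (hcC : c * Fintype.card α ^ r ≤ #C) (hB : #B ≤ c * Fintype.card α / 2) :
    c / 2 * Fintype.card α ^ r ≤ #{S ∈ C | Disjoint S B} := by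
  have key := card_mul_card_le_card_filter_disjoint_add hC B
  have hN : (0 : ℝ) < Fintype.card α := by exact_mod_cast hα
  refine le_of_mul_le_mul_right ?_ hN
  have : (#C : ℝ) * Fintype.card α ≤
      #{S ∈ C | Disjoint S B} * Fintype.card α + #B * Fintype.card α ^ r := by
    exact_mod_cast key
  nlinarith [pow_nonneg hN.le r]

end Counting

theorem card_filter_union_insert_eq_le {α : Type*} [DecidableEq α]
    (D : Finset ((_ : Finset α) × (_ : α) × Finset α))
    (hD : ∀ p ∈ D, Disjoint (insert p.2.1 p.1) p.2.2) (T : Finset α) :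
    #{p ∈ D | p.1 ∪ insert p.2.1 p.2.2 = T} ≤ 2 ^ #T * #T := by
  have hrecover : ∀ p ∈ D, (p.1 ∪ insert p.2.1 p.2.2) \ insert p.2.1 p.1 = p.2.2 :=
    fun p hp => by rw [union_insert, ← insert_union, union_sdiff_cancel_left (hD p hp)]
  rw [← card_powerset, ← card_product]
  refine card_le_card_of_injOn (fun p => (p.1, p.2.1)) ?_ ?_
  · rintro ⟨S₁, z, S₂⟩ hp
    obtain ⟨-, rfl⟩ := mem_filter.1 hp
    exact mem_product.2
      ⟨mem_powerset.2 subset_union_left, mem_union_right _ (mem_insert_self _ _)⟩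
  · rintro ⟨S₁, z, S₂⟩ hp ⟨S₁', z', S₂'⟩ hp' h
    obtain ⟨hpD, hpT⟩ := mem_filter.1 hp
    obtain ⟨hpD', hpT'⟩ := mem_filter.1 hp'
    obtain ⟨rfl, rfl⟩ := Prod.mk.inj h
    have := (hrecover _ hpD).symm.trans (hpT.trans hpT'.symm ▸ hrecover _ hpD')
    simp_all

section Closeness

variable {n : ℕ} {V : Type} [Fintype V] [DecidableEq V]
  {E : Finset (Finset (Fin n))} {EF : Finset (Finset V)}

open Classical in
noncomputable def closeSets (E : Finset (Finset (Fin n))) (EF : Finset (Finset V)) (m : ℕ)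
    (x y : Fin n) : Finset (Finset (Fin n)) :=
  {S | S.card = m ∧ x ∉ S ∧ y ∉ S ∧
    HasFactorOn E EF (insert x S) ∧ HasFactorOn E EF (insert y S)}

theorem mem_closeSets {m : ℕ} {x y : Fin n} {S : Finset (Fin n)} :
    S ∈ closeSets E EF m x y ↔ S.card = m ∧ x ∉ S ∧ y ∉ S ∧
      HasFactorOn E EF (insert x S) ∧ HasFactorOn E EF (insert y S) := by
  simp [closeSets]

theorem closeSets_comm (m : ℕ) (x y : Fin n) :
    closeSets E EF m x y = closeSets E EF m y x := by
  ext S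
  simp only [mem_closeSets]
  tauto

theorem closeTo_iff {i : ℕ} {η : ℝ} {x y : Fin n} :
    CloseTo E EF i η x y ↔
      η * n ^ (i * Fintype.card V - 1) ≤ #(closeSets E EF (i * Fintype.card V - 1) x y) := by
  rw [CloseTo, ← Set.ncard_coe_finset]
  congr! 3
  ext S
  simp [mem_closeSets]

theorem union_insert_mem_closeSets {m₁ m₂ : ℕ} {x y z w : Fin n} {S₁ S₂ : Finset (Fin n)}
    (hS₁ : S₁ ∈ closeSets E EF m₁ x y) (hz : z ∉ insert x (insert y S₁))
    (hS₂ : S₂ ∈ closeSets E EF m₂ w z) (hdisj : Disjoint S₂ (insert x (insert y S₁))) :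
    S₁ ∪ insert z S₂ ∈ closeSets E EF (m₁ + 1 + m₂) x y := by
  obtain ⟨hc₁, hx₁, hy₁, hfx, hfy⟩ := mem_closeSets.1 hS₁
  obtain ⟨hc₂, -, hz₂, -, hfz⟩ := mem_closeSets.1 hS₂
  simp only [mem_insert, not_or, disjoint_insert_right] at hz hdisj
  obtain ⟨hx₂, hy₂, hS₁₂⟩ := hdisj
  refine mem_closeSets.2 ⟨?_, ?_, ?_, ?_, ?_⟩
  · rw [card_union_of_disjoint (disjoint_insert_right.2 ⟨hz.2.2, hS₁₂.symm⟩),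
      card_insert_of_notMem hz₂, hc₁, hc₂]
    omega
  · simp [hx₁, Ne.symm hz.1, hx₂]
  · simp [hy₁, Ne.symm hz.2.1, hy₂]
  · rw [← insert_union]
    refine hfx.union_s10 hfz ?_
    simp [hz.1, hz.2.2, hx₂, hS₁₂.symm]
  · rw [← insert_union]
    refine hfy.union_s10 hfz ?_
    simp [hz.2.1, hz.2.2, hy₂, hS₁₂.symm]

theorem mul_pow_le_card_closeSets_add {m₁ m₂ : ℕ} {η₁ η₂ ε : ℝ} {x y : Fin n}
    (N : Finset (Fin n)) (hε : (m₁ : ℝ) + 2 ≤ ε * n / 2) (hη₂ : (m₁ : ℝ) + 2 ≤ η₂ * n / 2)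
    (hxy : η₁ * n ^ m₁ ≤ #(closeSets E EF m₁ x y)) (hN : ε * n ≤ #N)
    (hxN : ∀ z ∈ N, η₂ * n ^ m₂ ≤ #(closeSets E EF m₂ x z)) :
    η₁ * n ^ m₁ * (ε * n / 2 * (η₂ / 2 * n ^ m₂)) ≤
      2 ^ (m₁ + 1 + m₂) * (m₁ + 1 + m₂ : ℕ) * #(closeSets E EF (m₁ + 1 + m₂) x y) := by
  have hn : (0 : ℝ) < n := by exact_mod_cast x.pos
  have hε0 : 0 ≤ ε := by nlinarith
  have hη₂0 : 0 ≤ η₂ := by nlinarith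
  let X : Finset (Fin n) → Finset (Fin n) := fun S₁ => insert x (insert y S₁)
  have hX : ∀ S₁ ∈ closeSets E EF m₁ x y, (#(X S₁) : ℝ) ≤ m₁ + 2 := by
    intro S₁ hS₁
    have : #(X S₁) ≤ #S₁ + 2 := (card_insert_le _ _).trans (Nat.succ_le_succ (card_insert_le _ _))
    rw [(mem_closeSets.1 hS₁).1] at this
    exact_mod_cast this
  let C : Finset (Fin n) → Fin n → Finset (Finset (Fin n)) := fun S₁ z =>
    {S₂ ∈ closeSets E EF m₂ x z | Disjoint S₂ (X S₁)}
  let D := (closeSets E EF m₁ x y).sigma fun S₁ => (N \ X S₁).sigma (C S₁)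
  have hD : η₁ * n ^ m₁ * (ε * n / 2 * (η₂ / 2 * n ^ m₂)) ≤ #D := by
    refine mul_le_card_sigma_s10 _ _ (by positivity) hxy fun S₁ hS₁ =>
      mul_le_card_sigma_s10 _ _ (by positivity) ?_ fun z hz => ?_
    · have : (#N : ℝ) ≤ #(N \ X S₁) + #(X S₁) := by exact_mod_cast card_le_card_sdiff_add_card
      linarith [hX S₁ hS₁]
    · have hcard : ∀ S ∈ closeSets E EF m₂ x z, #S = m₂ := fun S hS => (mem_closeSets.1 hS).1
      simpa using half_mul_pow_le_card_filter_disjoint hcard (B := X S₁)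
        (by simpa using x.pos) (by simpa using hxN z (mem_sdiff.1 hz).1)
        (by simpa using (hX S₁ hS₁).trans hη₂)
  have hglue : ∀ p ∈ D, p.1 ∪ insert p.2.1 p.2.2 ∈ closeSets E EF (m₁ + 1 + m₂) x y := by
    rintro ⟨S₁, z, S₂⟩ hp
    simp only [D, C, mem_sigma, mem_sdiff, mem_filter] at hp
    exact union_insert_mem_closeSets hp.1 hp.2.1.2 hp.2.2.1 hp.2.2.2
  have hsplit : ∀ p ∈ D, Disjoint (insert p.2.1 p.1) p.2.2 := by
    rintro ⟨S₁, z, S₂⟩ hp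
    simp only [D, C, X, mem_sigma, mem_filter, disjoint_insert_right] at hp
    exact disjoint_insert_left.2 ⟨(mem_closeSets.1 hp.2.2.1).2.2.1, hp.2.2.2.2.2.symm⟩
  have hcount : #D ≤ 2 ^ (m₁ + 1 + m₂) * (m₁ + 1 + m₂) * #(closeSets E EF (m₁ + 1 + m₂) x y) :=
    card_le_mul_card_image_of_maps_to hglue _ fun T hT =>
      (card_filter_union_insert_eq_le D hsplit T).trans_eq (by rw [(mem_closeSets.1 hT).1])
  exact hD.trans (by exact_mod_cast hcount)

end Closeness

theorem close_additive_set_general (k i₁ i₂ t : ℕ) (η₁ η₂ ε : ℝ)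
    (hi₁ : 1 ≤ i₁) (hi₂ : 1 ≤ i₂) (ht : 1 ≤ t)
    (hη₁ : 0 < η₁) (hη₂ : 0 < η₂) (hε : 0 < ε) :
    ∃ η : ℝ, 0 < η ∧ ∃ n₀ : ℕ, ∀ n : ℕ, n₀ ≤ n →
      ∀ EF : Finset (Finset (Fin t)), (∀ e ∈ EF, e.card = k) →
      ∀ E : Finset (Finset (Fin n)), (∀ e ∈ E, e.card = k) →
      ∀ x y : Fin n, x ≠ y →
      CloseTo E EF i₁ η₁ y x →
      ε * (n : ℝ) ≤ ((Ntilde E EF i₂ η₂ x).ncard : ℝ) →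
      CloseTo E EF (i₁ + i₂) η x y := by
  set m₁ := i₁ * t - 1
  set m₂ := i₂ * t - 1
  have hm : (i₁ + i₂) * t - 1 = m₁ + 1 + m₂ := by
    have : 1 ≤ i₁ * t := Nat.one_le_iff_ne_zero.2 (by positivity)
    have : 1 ≤ i₂ * t := Nat.one_le_iff_ne_zero.2 (by positivity)
    rw [add_mul]
    omega
  have hlarge (c : ℝ) (hc : 0 < c) : ∀ᶠ n : ℕ in Filter.atTop, (m₁ : ℝ) + 2 ≤ c * n / 2 :=
    ((tendsto_natCast_atTop_atTop.const_mul_atTop hc).atTop_div_const two_pos).eventually_ge_atTop _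
  obtain ⟨n₀, hn₀⟩ := Filter.eventually_atTop.1 ((hlarge ε hε).and (hlarge η₂ hη₂))
  refine ⟨η₁ * (ε / 2) * (η₂ / 2) / (2 ^ (m₁ + 1 + m₂) * (m₁ + 1 + m₂ : ℕ)), by positivity,
    n₀, fun n hn EF _ E _ x y _ hyx hN => ?_⟩
  rw [Set.ncard_eq_toFinset_card _ (Set.toFinite _)] at hN
  rw [closeTo_iff, closeSets_comm, Fintype.card_fin] at hyx
  rw [closeTo_iff, Fintype.card_fin, hm, div_mul_eq_mul_div, div_le_iff₀ (by positivity)]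
  have hxN : ∀ z ∈ (Set.toFinite (Ntilde E EF i₂ η₂ x)).toFinset,
      η₂ * n ^ m₂ ≤ #(closeSets E EF m₂ x z) := fun z hz => by
    have hz : CloseTo E EF i₂ η₂ x z := (Set.toFinite (Ntilde E EF i₂ η₂ x)).mem_toFinset.1 hz
    rwa [closeTo_iff, Fintype.card_fin] at hz
  calc _ = η₁ * n ^ m₁ * (ε * n / 2 * (η₂ / 2 * n ^ m₂)) := by rw [pow_add, pow_succ]; ring
    _ ≤ _ := mul_pow_le_card_closeSets_add _ (hn₀ n hn).1 (hn₀ n hn).2 hyx hN hxN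
    _ = _ := mul_comm _ _

/-- Additivity of closeness: if `y` is `(F, i₁, η₁)`-close to `x` and the
`(F, i₂, η₂)`-closed neighbourhood of `x` is large, then `x` is `(F, i₁+i₂, η)`-close
to `y`. -/
theorem close_additive_set (k i₁ i₂ t : ℕ) (η₁ η₂ ε : ℝ)
    (hk : 2 ≤ k) (hi₁ : 1 ≤ i₁) (hi₂ : 1 ≤ i₂) (ht : 1 ≤ t)
    (hη₁ : 0 < η₁) (hη₂ : 0 < η₂) (hε : 0 < ε) :
    ∃ η : ℝ, 0 < η ∧ ∃ n₀ : ℕ, ∀ n : ℕ, n₀ ≤ n →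
      ∀ EF : Finset (Finset (Fin t)), (∀ e ∈ EF, e.card = k) →
      ∀ E : Finset (Finset (Fin n)), (∀ e ∈ E, e.card = k) →
      ∀ x y : Fin n, x ≠ y →
      CloseTo E EF i₁ η₁ y x →
      ε * (n : ℝ) ≤ ((Ntilde E EF i₂ η₂ x).ncard : ℝ) →
      CloseTo E EF (i₁ + i₂) η x y :=
  close_additive_set_general k i₁ i₂ t η₁ η₂ ε hi₁ hi₂ ht hη₁ hη₂ hε
end

section
/- For all integers k, m ≥ 2 and every constant γ > 0, there exist a constant c = c(γ, k, m) > 0 and an integer n₀ = n₀(γ, k, m) such that for every k-graph H on n ≥ n₀ vertices with δ₁(H) ≥ (1/2 + γ)·C(n,k−1) and every vertex v ∈ V(H), there are at least c·n^{km−1} copies of K_k^k(m) in H containing v. -/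
open Finset

/-!
Encode a copy of `K_k^k(m)` by a map `φ : Fin k → Fin m → Fin n` sending every transversal
`i ↦ φ i (t i)` to an edge. By the degree condition any two vertices `v, x` have at least
`2γ C(n, k-1)` common link `(k-1)`-sets, hence `≳ n^(k-1)` common link tuples. Erdős's blow-up
argument (one part at a time, by convexity) turns these into `≳ n^((k-1)m)` maps `ρ` of
`K_{k-1}^{k-1}(m)` into the common link of `v` and `x`. Summing over `x`, a map `ρ` into the link
of `v` lies on average in the links of `≳ n` vertices `x`; choosing the other `m - 1` vertices of
the first part among those gives, by convexity again, `≳ n^(km-1)` maps `φ` with `φ 0 0 = v`, and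
only `O(n^(km-2))` of them fail to be injective.
-/

theorem pow_mul_card_le_sum_pow {ι : Type*} [Fintype ι] {f : ι → ℝ} (hf : ∀ i, 0 ≤ f i)
    {θ : ℝ} (hθ : 0 ≤ θ) (h : θ * Fintype.card ι ≤ ∑ i, f i) (p : ℕ) :
    θ ^ p * Fintype.card ι ≤ ∑ i, f i ^ p := by
  rcases p with _ | p
  · simp
  rcases isEmpty_or_nonempty ι with hι | hι
  · simp
  have hcard : (0 : ℝ) < Fintype.card ι := Nat.cast_pos.2 Fintype.card_pos
  have hjensen := pow_sum_le_card_mul_sum_pow (s := univ) (fun i _ => hf i) (n := p)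
  rw [card_univ] at hjensen
  refine le_of_mul_le_mul_left ?_ (pow_pos hcard p)
  calc (Fintype.card ι : ℝ) ^ p * (θ ^ (p + 1) * Fintype.card ι)
      = (θ * Fintype.card ι) ^ (p + 1) := by ring
    _ ≤ (∑ i, f i) ^ (p + 1) := pow_le_pow_left₀ (by positivity) h _
    _ ≤ _ := hjensen

theorem half_mul_pow_le_of_le_add {c D X x : ℝ} (hc : 0 < c) (hx : 2 * D / c ≤ x) {e : ℕ}
    (hx₀ : 0 ≤ x) (h : c * x ^ (e + 1) ≤ X + D * x ^ e) : c / 2 * x ^ (e + 1) ≤ X := by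
  rw [div_le_iff₀ hc] at hx
  have : D * x ^ e ≤ c / 2 * x ^ (e + 1) := by
    rw [pow_succ]
    nlinarith [pow_nonneg hx₀ e]
  linarith

section Counting

variable {α β : Type*} [Fintype α] [Fintype β]

theorem card_filter_forall_fin (P : α → Prop) [DecidablePred P] (s : ℕ) :
    #{c : Fin s → α | ∀ j, P (c j)} = #{x | P x} ^ s := by
  rw [← Fintype.card_piFinset_const]
  congr 1
  ext c
  simp

theorem sum_card_pow_eq_sum_card_forall (P : α → β → Prop) [∀ a b, Decidable (P a b)] (s : ℕ) :
    ∑ b, #{a | P a b} ^ s = ∑ c : Fin s → α, #{b | ∀ j, P (c j) b} := by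
  simp_rw [← card_filter_forall_fin, card_filter]
  exact sum_comm

theorem card_filter_fin_cons {r : ℕ} (Q : (Fin (r + 1) → α) → Prop) [DecidablePred Q] :
    #{y | Q y} = ∑ c, #{z | Q (Fin.cons c z)} := by
  rw [card_filter, ← (Fin.consEquiv fun _ => α).sum_comp, Fintype.sum_prod_type]
  simp only [card_filter]
  rfl

theorem card_filter_fin_cons' {r : ℕ} (Q : (Fin (r + 1) → α) → Prop) [DecidablePred Q] :
    #{y | Q y} = ∑ z, #{c | Q (Fin.cons c z)} := by
  rw [card_filter_fin_cons]
  simp_rw [card_filter]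
  exact sum_comm

theorem card_filter_forall_and_zero_eq [DecidableEq α] (P : α → Prop) [DecidablePred P] (v : α)
    (s : ℕ) : #{c : Fin (s + 2) → α | (∀ j, P (c j)) ∧ c 0 = v} = #{x | P v ∧ P x} ^ (s + 1) := by
  rw [card_filter_fin_cons, ← card_filter_forall_fin, sum_eq_single v]
  · simp only [Fin.forall_fin_succ, Fin.cons_zero, Fin.cons_succ, and_true, forall_and_left]
  · intro x _ hx
    simp [hx]
  · simp

end Counting

/-- `ψ i j` is the image of the `j`-th vertex in part `i` of the complete multipartite blow-up of
the ordered hypergraph `χ`; `ψ` need not be injective. -/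
def IsBlowupHom {ι α β : Type*} (χ : (ι → α) → Prop) (ψ : ι → β → α) : Prop :=
  ∀ t : ι → β, χ fun i => ψ i (t i)

instance {ι α β : Type*} [Fintype ι] [DecidableEq ι] [Fintype β] (χ : (ι → α) → Prop)
    [DecidablePred χ] : DecidablePred (IsBlowupHom (β := β) χ) :=
  fun _ => inferInstanceAs (Decidable (∀ _, _))

section BlowUp

variable {α β : Type*} {r : ℕ}

theorem isBlowupHom_and {ι : Type*} {χ χ' : (ι → α) → Prop} {ψ : ι → β → α} :
    IsBlowupHom (fun y => χ y ∧ χ' y) ψ ↔ IsBlowupHom χ ψ ∧ IsBlowupHom χ' ψ :=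
  forall_and

theorem isBlowupHom_forall_iff {ι κ : Type*} {χ : κ → (ι → α) → Prop} {ψ : ι → β → α} :
    IsBlowupHom (fun y => ∀ j, χ j y) ψ ↔ ∀ j, IsBlowupHom (χ j) ψ :=
  forall_comm

theorem isBlowupHom_cons_iff {χ : (Fin (r + 1) → α) → Prop} {c : β → α} {ψ : Fin r → β → α} :
    IsBlowupHom χ (Fin.cons c ψ) ↔ ∀ j, IsBlowupHom (fun z => χ (Fin.cons (c j) z)) ψ := by
  have hcons (j : β) (t : Fin r → β) :
      (fun i => (Fin.cons c ψ : Fin (r + 1) → β → α) i ((Fin.cons j t : Fin (r + 1) → β) i)) =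
        Fin.cons (c j) fun i => ψ i (t i) := by
    funext i
    cases i using Fin.cases <;> simp
  simp only [IsBlowupHom, Fin.forall_fin_succ_pi, hcons]

variable [Fintype α]

theorem card_isBlowupHom_succ (χ : (Fin (r + 1) → α) → Prop) [DecidablePred χ] (s : ℕ) :
    #{ψ : Fin (r + 1) → Fin s → α | IsBlowupHom χ ψ} =
      ∑ c : Fin s → α,
        #{ψ : Fin r → Fin s → α | IsBlowupHom (fun z => ∀ j, χ (Fin.cons (c j) z)) ψ} := by
  simp only [card_filter_fin_cons, isBlowupHom_cons_iff, isBlowupHom_forall_iff]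

theorem pow_mul_pow_le_card_isBlowupHom [Nonempty α] (s : ℕ) (χ : (Fin r → α) → Prop)
    [DecidablePred χ] {θ : ℝ} (hθ : 0 ≤ θ) (h : θ * (Fintype.card α : ℝ) ^ r ≤ #{y | χ y}) :
    θ ^ (s ^ r) * (Fintype.card α : ℝ) ^ (r * s) ≤ #{ψ : Fin r → Fin s → α | IsBlowupHom χ ψ} := by
  induction r generalizing θ with
  | zero =>
    have hχ (ψ : Fin 0 → Fin s → α) : IsBlowupHom χ ψ ↔ χ finZeroElim := by
      simp [IsBlowupHom, Subsingleton.elim _ (finZeroElim : Fin 0 → α)]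
    simp only [hχ]
    simpa [Subsingleton.elim _ (finZeroElim : Fin 0 → α), apply_ite] using h
  | succ r ih =>
    -- Split `ψ` into its first part `c : Fin s → α` and the rest. By convexity the parts `c` have
    -- on average density `≥ θ ^ s` of common extensions `z`; the induction hypothesis applies to
    -- each `c` at its own density `a c / N ^ r`, and convexity again bounds the sum over `c`.
    set N : ℝ := (Fintype.card α : ℝ)
    have hN : 0 < N := Nat.cast_pos.2 Fintype.card_pos
    set b : (Fin r → α) → ℝ := fun z => #{x | χ (Fin.cons x z)}
    set a : (Fin s → α) → ℝ := fun c => #{z : Fin r → α | ∀ j, χ (Fin.cons (c j) z)}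
    have hb : θ * N * Fintype.card (Fin r → α) ≤ ∑ z, b z := by
      rw [card_filter_fin_cons'] at h
      simpa [b, N, pow_succ, mul_assoc, mul_comm] using h
    have ha : θ ^ s * Fintype.card (Fin s → α) ≤ ∑ c, a c / N ^ r := by
      have hpow := pow_mul_card_le_sum_pow (fun z => by positivity) (by positivity) hb s
      have hsum : ∑ z, b z ^ s = ∑ c, a c := by
        simp only [a, b]
        exact_mod_cast sum_card_pow_eq_sum_card_forall (fun x z => χ (Fin.cons x z)) s
      rw [← sum_div, le_div_iff₀ (by positivity), ← hsum]
      simp only [Fintype.card_fun, Fintype.card_fin, Nat.cast_pow] at hpow ⊢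
      linear_combination hpow
    have hK (c : Fin s → α) : (a c / N ^ r) ^ (s ^ r) * N ^ (r * s) ≤
        #{ψ : Fin r → Fin s → α | IsBlowupHom (fun z => ∀ j, χ (Fin.cons (c j) z)) ψ} :=
      ih _ (by positivity) (div_mul_cancel₀ _ (pow_pos hN r).ne').le
    calc θ ^ (s ^ (r + 1)) * N ^ ((r + 1) * s)
        = (θ ^ s) ^ (s ^ r) * Fintype.card (Fin s → α) * N ^ (r * s) := by
          simp only [Fintype.card_fun, Fintype.card_fin, Nat.cast_pow]
          ring
      _ ≤ (∑ c, (a c / N ^ r) ^ (s ^ r)) * N ^ (r * s) := by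
          gcongr
          exact pow_mul_card_le_sum_pow (fun c => by positivity) (by positivity) ha _
      _ ≤ ∑ c : Fin s → α, (#{ψ : Fin r → Fin s → α |
            IsBlowupHom (fun z => ∀ j, χ (Fin.cons (c j) z)) ψ} : ℝ) := by
          rw [sum_mul]
          exact sum_le_sum fun c _ => hK c
      _ = _ := by
          rw [card_isBlowupHom_succ]
          push_cast
          rfl

variable [DecidableEq α]

theorem card_rooted_isBlowupHom (χ : (Fin (r + 1) → α) → Prop) [DecidablePred χ] (v : α)
    (s : ℕ) :
    #{φ : Fin (r + 1) → Fin (s + 2) → α | IsBlowupHom χ φ ∧ φ 0 0 = v} =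
      ∑ ρ : Fin r → Fin (s + 2) → α, #{x | IsBlowupHom (fun z => χ (Fin.cons v z)) ρ ∧
        IsBlowupHom (fun z => χ (Fin.cons x z)) ρ} ^ (s + 1) := by
  rw [card_filter_fin_cons']
  refine sum_congr rfl fun ρ _ => ?_
  simp only [isBlowupHom_cons_iff, Fin.cons_zero]
  exact card_filter_forall_and_zero_eq (fun x => IsBlowupHom (fun z => χ (Fin.cons x z)) ρ) v s

theorem pow_mul_pow_le_card_rooted_isBlowupHom [Nonempty α] (χ : (Fin (r + 1) → α) → Prop)
    [DecidablePred χ] (v : α) {θ : ℝ} (hθ : 0 ≤ θ)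
    (h : ∀ x, θ * (Fintype.card α : ℝ) ^ r ≤ #{z | χ (Fin.cons v z) ∧ χ (Fin.cons x z)})
    (s : ℕ) :
    (θ ^ ((s + 2) ^ r)) ^ (s + 1) * (Fintype.card α : ℝ) ^ (r * (s + 2) + (s + 1)) ≤
      #{φ : Fin (r + 1) → Fin (s + 2) → α | IsBlowupHom χ φ ∧ φ 0 0 = v} := by
  set N : ℝ := (Fintype.card α : ℝ)
  set link : α → (Fin r → Fin (s + 2) → α) → Prop :=
    fun x ρ => IsBlowupHom (fun z => χ (Fin.cons x z)) ρ
  set f : (Fin r → Fin (s + 2) → α) → ℝ := fun ρ => #{x | link v ρ ∧ link x ρ}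
  have hsum : θ ^ ((s + 2) ^ r) * N * Fintype.card (Fin r → Fin (s + 2) → α) ≤ ∑ ρ, f ρ := by
    have hcomm : ∑ ρ, f ρ = ∑ x, (#{ρ | link v ρ ∧ link x ρ} : ℝ) := by
      simp only [f, card_filter, Nat.cast_sum]
      exact sum_comm
    have hpair (x : α) : θ ^ ((s + 2) ^ r) * N ^ (r * (s + 2)) ≤ #{ρ | link v ρ ∧ link x ρ} := by
      simp only [link, ← isBlowupHom_and]
      exact pow_mul_pow_le_card_isBlowupHom _ _ hθ (h x)
    calc θ ^ ((s + 2) ^ r) * N * Fintype.card (Fin r → Fin (s + 2) → α)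
        = ∑ _x : α, θ ^ ((s + 2) ^ r) * N ^ (r * (s + 2)) := by
          simp only [Fintype.card_fun, Fintype.card_fin, sum_const, card_univ, nsmul_eq_mul,
            Nat.cast_pow, N, pow_mul]
          ring
      _ ≤ _ := hcomm ▸ sum_le_sum fun x _ => hpair x
  calc (θ ^ ((s + 2) ^ r)) ^ (s + 1) * N ^ (r * (s + 2) + (s + 1))
      = (θ ^ ((s + 2) ^ r) * N) ^ (s + 1) * Fintype.card (Fin r → Fin (s + 2) → α) := by
        simp only [Fintype.card_fun, Fintype.card_fin, Nat.cast_pow, N]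
        ring
    _ ≤ ∑ ρ, f ρ ^ (s + 1) :=
        pow_mul_card_le_sum_pow (fun ρ => by positivity) (by positivity) hsum (s + 1)
    _ = _ := by
        rw [card_rooted_isBlowupHom]
        push_cast
        rfl

end BlowUp

theorem Finset.image_univ_fin_cons {α : Type*} [DecidableEq α] {r : ℕ} (v : α) (z : Fin r → α) :
    univ.image (Fin.cons v z : Fin (r + 1) → α) = insert v (univ.image z) := by
  apply coe_injective
  push_cast [coe_image, coe_univ, Set.image_univ, Fin.range_cons]
  rfl

theorem card_filter_card_eq_le_card_filter_image {α : Type*} [Fintype α] [LinearOrder α]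
    (r : ℕ) (P : Finset α → Prop) [DecidablePred P] :
    #{S : Finset α | S.card = r ∧ P S} ≤ #{z : Fin r → α | P (univ.image z)} := by
  refine card_le_card_of_surjOn (fun z => univ.image z) fun S hS => ?_
  simp only [coe_filter, mem_univ, true_and, Set.mem_ofPred_eq] at hS
  have hrange : univ.image (S.orderEmbOfFin hS.1) = S := by
    apply coe_injective
    push_cast [coe_image, coe_univ, Set.image_univ]
    exact S.range_orderEmbOfFin hS.1
  exact ⟨S.orderEmbOfFin hS.1, by simpa [hrange] using hS.2, hrange⟩

theorem pow_le_two_pow_mul_factorial_mul_choose {n r : ℕ} (hn : 2 * r ≤ n) :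
    n ^ r ≤ 2 ^ r * r.factorial * n.choose r := by
  calc n ^ r ≤ (2 * (n + 1 - r)) ^ r := Nat.pow_le_pow_left (by omega) r
    _ = 2 ^ r * (n + 1 - r) ^ r := mul_pow ..
    _ ≤ 2 ^ r * (r.factorial * n.choose r) := by
        rw [← Nat.descFactorial_eq_factorial_mul_choose]
        exact Nat.mul_le_mul_left _ (Nat.pow_sub_le_descFactorial n r)
    _ = _ := (mul_assoc ..).symm

section NonInjective
variable {ι α : Type*} [Fintype ι] [DecidableEq ι] [Fintype α] [DecidableEq α]

theorem card_filter_apply_eq_and_apply_eq_le {i₀ i j : ι} (hi : i ≠ i₀) (hij : i ≠ j) (a : α) :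
    #{f : ι → α | f i₀ = a ∧ f i = f j} ≤ Fintype.card α ^ (Fintype.card ι - 2) := by
  have hcard : Fintype.card {l : ι // l ≠ i ∧ l ≠ i₀} = Fintype.card ι - 2 := by
    rw [Fintype.card_subtype, ← card_pair hi, ← card_univ, ← card_sdiff_of_subset (subset_univ _)]
    congr 1
    ext l
    simp
  rw [← hcard, ← Fintype.card_fun, ← card_univ]
  refine card_le_card_of_injOn (fun f l => f l) (fun _ _ => mem_coe.2 (mem_univ _)) ?_
  -- `f` is determined by its values off `{i, i₀}`.
  intro f hf g hg hfg
  simp only [coe_filter, mem_univ, true_and, Set.mem_ofPred_eq] at hf hg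
  have hrest : ∀ l, l ≠ i → l ≠ i₀ → f l = g l := fun l h₁ h₂ => congrFun hfg ⟨l, h₁, h₂⟩
  have hroot : f i₀ = g i₀ := hf.1.trans hg.1.symm
  have hj : f j = g j := by
    by_cases hj : j = i₀
    · exact hj ▸ hroot
    · exact hrest j (Ne.symm hij) hj
  funext l
  by_cases hl : l = i
  · rw [hl, hf.2, hg.2, hj]
  by_cases hl' : l = i₀
  · rw [hl', hroot]
  exact hrest l hl hl'

theorem card_rooted_not_injective_le (i₀ : ι) (a : α) :
    #{f : ι → α | f i₀ = a ∧ ¬ Function.Injective f} ≤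
      Fintype.card ι ^ 2 * Fintype.card α ^ (Fintype.card ι - 2) := by
  calc #{f : ι → α | f i₀ = a ∧ ¬ Function.Injective f}
      ≤ #((univ : Finset (ι × ι)).biUnion fun p =>
          {f : ι → α | p.1 ≠ i₀ ∧ p.1 ≠ p.2 ∧ f i₀ = a ∧ f p.1 = f p.2}) := by
        refine card_le_card fun f hf => ?_
        simp only [mem_filter, mem_univ, true_and, Function.Injective, not_forall] at hf
        obtain ⟨hroot, i, j, hij, hne⟩ := hf
        simp only [mem_biUnion, mem_univ, mem_filter, true_and, Prod.exists]
        by_cases hi : i = i₀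
        · exact ⟨j, i, fun h => hne (hi.trans h.symm), fun h => hne h.symm, hroot, hij.symm⟩
        · exact ⟨i, j, hi, hne, hroot, hij⟩
    _ ≤ Fintype.card (ι × ι) * Fintype.card α ^ (Fintype.card ι - 2) := by
        refine card_biUnion_le_card_mul _ _ _ fun p _ => ?_
        by_cases hp : p.1 ≠ i₀ ∧ p.1 ≠ p.2
        · simpa [hp] using card_filter_apply_eq_and_apply_eq_le hp.1 hp.2 a
        · rw [filter_false_of_mem fun f _ hf => hp ⟨hf.1, hf.2.1⟩, card_empty]
          exact Nat.zero_le _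
    _ = _ := by rw [Fintype.card_prod, sq]

end NonInjective

section Hypergraph

variable {n : ℕ} (E : Finset (Finset (Fin n)))

theorem degOn_singleton_le (r : ℕ) (v : Fin n) :
    degOn E (r + 1) {v} ≤ #{S : Finset (Fin n) | S.card = r ∧ insert v S ∈ E} := by
  refine (Set.ncard_le_ncard (fun S hS => ?_) (finite_toSet _)).trans_eq (Set.ncard_coe_finset _)
  simp_all [union_singleton]

theorem two_mul_choose_le_card_common_link {r : ℕ} {γ : ℝ} {v x : Fin n}
    (hv : (1 / 2 + γ) * (n.choose r : ℝ) ≤ degOn E (r + 1) {v})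
    (hx : (1 / 2 + γ) * (n.choose r : ℝ) ≤ degOn E (r + 1) {x}) :
    2 * γ * n.choose r ≤
      #{S : Finset (Fin n) | S.card = r ∧ insert v S ∈ E ∧ insert x S ∈ E} := by
  let link (w : Fin n) : Finset (Finset (Fin n)) := {S | S.card = r ∧ insert w S ∈ E}
  have hinter : link v ∩ link x =
      ({S | S.card = r ∧ insert v S ∈ E ∧ insert x S ∈ E} : Finset (Finset (Fin n))) := by
    ext S
    simp only [link, mem_inter, mem_filter, mem_univ, true_and]
    tauto
  have hunion : #(link v ∪ link x) ≤ n.choose r := by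
    refine (card_le_card (t := powersetCard r univ) fun S hS => ?_).trans (by simp)
    rcases mem_union.1 hS with hS | hS <;> simpa [link] using (mem_filter.1 hS).2.1
  have hcard : (#(link v) + #(link x) : ℝ) ≤ n.choose r + #(link v ∩ link x) := by
    have := card_union_add_card_inter (link v) (link x)
    exact_mod_cast (by omega : #(link v) + #(link x) ≤ n.choose r + #(link v ∩ link x))
  have hdeg_v : (degOn E (r + 1) {v} : ℝ) ≤ #(link v) := Nat.cast_le.2 (degOn_singleton_le E r v)
  have hdeg_x : (degOn E (r + 1) {x} : ℝ) ≤ #(link x) := Nat.cast_le.2 (degOn_singleton_le E r x)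
  rw [← hinter]
  linarith

theorem le_card_common_link_tuples {r : ℕ} (hn : 2 * r ≤ n) {γ : ℝ} (hγ : 0 ≤ γ)
    {v x : Fin n} (hv : (1 / 2 + γ) * (n.choose r : ℝ) ≤ degOn E (r + 1) {v})
    (hx : (1 / 2 + γ) * (n.choose r : ℝ) ≤ degOn E (r + 1) {x}) :
    γ / (2 ^ r * r.factorial) * n ^ r ≤
      #{z : Fin r → Fin n | insert v (univ.image z) ∈ E ∧ insert x (univ.image z) ∈ E} := by
  have hchoose : (n : ℝ) ^ r ≤ 2 ^ r * r.factorial * n.choose r := by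
    exact_mod_cast pow_le_two_pow_mul_factorial_mul_choose hn
  calc γ / (2 ^ r * r.factorial) * n ^ r
      ≤ γ / (2 ^ r * r.factorial) * (2 ^ r * r.factorial * n.choose r) := by gcongr
    _ = γ * n.choose r := by field_simp
    _ ≤ 2 * γ * n.choose r := by
        have : (0 : ℝ) ≤ γ * n.choose r := by positivity
        linarith
    _ ≤ #{S : Finset (Fin n) | S.card = r ∧ insert v S ∈ E ∧ insert x S ∈ E} :=
        two_mul_choose_le_card_common_link E hv hx
    _ ≤ _ := by
        exact_mod_cast card_filter_card_eq_le_card_filter_image r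
          (fun S => insert v S ∈ E ∧ insert x S ∈ E)

end Hypergraph

theorem exists_eq_image_of_mem_multipartiteEdges {k m : ℕ} {e : Finset (Fin k × Fin m)}
    (he : e ∈ multipartiteEdges k m) : ∃ t : Fin k → Fin m, e = univ.image fun i => (i, t i) := by
  simp only [multipartiteEdges, mem_filter, mem_univ, true_and, card_eq_one] at he
  choose a ha using he
  have ha' : ∀ i, a i ∈ e ∧ (a i).1 = i := fun i => mem_filter.1 (ha i ▸ mem_singleton_self (a i))
  refine ⟨fun i => (a i).2, ?_⟩
  ext u
  simp only [mem_image, mem_univ, true_and]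
  constructor
  · intro hu
    have hmem : u ∈ e.filter (·.1 = u.1) := mem_filter.2 ⟨hu, rfl⟩
    rw [ha, mem_singleton] at hmem
    exact ⟨u.1, Prod.ext rfl (congrArg Prod.snd hmem.symm :)⟩
  · rintro ⟨i, rfl⟩
    rw [show (i, (a i).2) = a i from Prod.ext (ha' i).2.symm rfl]
    exact (ha' i).1

theorem map_mem_of_isBlowupHom {n k m : ℕ} {E : Finset (Finset (Fin n))}
    {f : Fin k × Fin m ↪ Fin n} (hf : IsBlowupHom (fun y => univ.image y ∈ E) (Function.curry f))
    {e : Finset (Fin k × Fin m)} (he : e ∈ multipartiteEdges k m) : e.map f ∈ E := by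
  obtain ⟨t, rfl⟩ := exists_eq_image_of_mem_multipartiteEdges he
  rw [map_eq_image, image_image]
  exact hf t

theorem card_rooted_isBlowupHom_le {n k m : ℕ} [NeZero k] [NeZero m]
    (E : Finset (Finset (Fin n))) (v : Fin n) :
    #{φ : Fin k → Fin m → Fin n | IsBlowupHom (fun y => univ.image y ∈ E) φ ∧ φ 0 0 = v} ≤
      {f : Fin k × Fin m ↪ Fin n |
          (∀ e ∈ multipartiteEdges k m, e.map f ∈ E) ∧ v ∈ univ.map f}.ncard +
        (k * m) ^ 2 * n ^ (k * m - 2) := by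
  set copies : Set (Fin k × Fin m ↪ Fin n) :=
    {f | (∀ e ∈ multipartiteEdges k m, e.map f ∈ E) ∧ v ∈ univ.map f}
  set homs : Finset (Fin k → Fin m → Fin n) :=
    {φ | IsBlowupHom (fun y => univ.image y ∈ E) φ ∧ φ 0 0 = v}
  have hinj : #(homs.filter fun φ => (Function.uncurry φ).Injective) ≤ copies.ncard := by
    rw [← Set.ncard_coe_finset]
    refine (Set.ncard_le_ncard ?_ (Set.toFinite _)).trans
      (Set.ncard_image_le (f := fun f : Fin k × Fin m ↪ Fin n => Function.curry ⇑f)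
        (s := copies) (Set.toFinite _))
    intro φ hφ
    simp only [coe_filter, mem_filter, mem_univ, true_and, Set.mem_ofPred_eq, homs] at hφ
    obtain ⟨⟨hhom, hroot⟩, hφinj⟩ := hφ
    refine ⟨⟨Function.uncurry φ, hφinj⟩, ⟨fun e he => map_mem_of_isBlowupHom hhom he, ?_⟩, rfl⟩
    exact mem_map.2 ⟨(0, 0), mem_univ _, hroot⟩
  have hbad : #{φ : Fin k → Fin m → Fin n | φ 0 0 = v ∧ ¬ (Function.uncurry φ).Injective} ≤
      (k * m) ^ 2 * n ^ (k * m - 2) := by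
    rw [← card_equiv (Equiv.curry (Fin k) (Fin m) (Fin n))
      (s := {f | f (0, 0) = v ∧ ¬ f.Injective}) (by simp)]
    simpa using card_rooted_not_injective_le ((0, 0) : Fin k × Fin m) v
  calc #homs = #(homs.filter fun φ => (Function.uncurry φ).Injective) +
        #(homs.filter fun φ => ¬ (Function.uncurry φ).Injective) :=
        (card_filter_add_card_filter_not ..).symm
    _ ≤ copies.ncard +
          #{φ : Fin k → Fin m → Fin n | φ 0 0 = v ∧ ¬ (Function.uncurry φ).Injective} := by
        refine add_le_add hinj (card_le_card fun φ hφ => ?_)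
        simp only [mem_filter, mem_univ, true_and, homs] at hφ ⊢
        exact ⟨hφ.1.2, hφ.2⟩
    _ ≤ _ := Nat.add_le_add_left hbad _

theorem le_ncard_copies_add_of_minDegree {n r : ℕ} (hn : 2 * r < n) (E : Finset (Finset (Fin n)))
    {γ : ℝ} (hγ : 0 ≤ γ) (hdeg : ∀ v, (1 / 2 + γ) * (n.choose r : ℝ) ≤ degOn E (r + 1) {v})
    (v : Fin n) (s : ℕ) :
    ((γ / (2 ^ r * r.factorial)) ^ ((s + 2) ^ r)) ^ (s + 1) * (n : ℝ) ^ (r * (s + 2) + s + 1) ≤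
      {f : Fin (r + 1) × Fin (s + 2) ↪ Fin n |
          (∀ e ∈ multipartiteEdges (r + 1) (s + 2), e.map f ∈ E) ∧ v ∈ univ.map f}.ncard +
        (((r + 1) * (s + 2)) ^ 2 : ℝ) * n ^ (r * (s + 2) + s) := by
  have : Nonempty (Fin n) := ⟨⟨0, by omega⟩⟩
  have hlink (x : Fin n) : γ / (2 ^ r * r.factorial) * (Fintype.card (Fin n) : ℝ) ^ r ≤
      #{z : Fin r → Fin n | univ.image (Fin.cons v z : Fin (r + 1) → Fin n) ∈ E ∧
        univ.image (Fin.cons x z : Fin (r + 1) → Fin n) ∈ E} := by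
    simpa only [image_univ_fin_cons, Fintype.card_fin] using
      le_card_common_link_tuples E hn.le hγ (hdeg v) (hdeg x)
  have hhoms := pow_mul_pow_le_card_rooted_isBlowupHom
    (fun y : Fin (r + 1) → Fin n => univ.image y ∈ E) v (by positivity) hlink s
  rw [Fintype.card_fin] at hhoms
  have hcopies := card_rooted_isBlowupHom_le (k := r + 1) (m := s + 2) E v
  rw [show (r + 1) * (s + 2) - 2 = r * (s + 2) + s from Nat.sub_eq_of_eq_add (by ring)] at hcopies
  exact_mod_cast hhoms.trans (Nat.cast_le.2 hcopies)

/-- In a `k`-graph with minimum vertex degree at least `(1/2 + γ) C(n,k-1)`, every vertex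
lies in at least `c n^{km-1}` copies of `K_k^k(m)`. -/
theorem copies_of_multipartite_through_vertex (k m : ℕ) (hk : 2 ≤ k) (hm : 2 ≤ m)
    (γ : ℝ) (hγ : 0 < γ) :
    ∃ c : ℝ, 0 < c ∧ ∃ n₀ : ℕ, ∀ n : ℕ, n₀ ≤ n →
      ∀ E : Finset (Finset (Fin n)), (∀ e ∈ E, e.card = k) →
      (∀ v : Fin n, (1 / 2 + γ) * (n.choose (k - 1) : ℝ) ≤ (degOn E k {v} : ℝ)) →
      ∀ v : Fin n,
        c * (n : ℝ) ^ (k * m - 1) ≤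
          (({f : Fin k × Fin m ↪ Fin n |
              (∀ e ∈ multipartiteEdges k m, e.map f ∈ E) ∧
              v ∈ Finset.map f Finset.univ}).ncard : ℝ) := by
  obtain ⟨r, rfl⟩ : ∃ r, k = r + 1 := ⟨k - 1, by omega⟩
  obtain ⟨s, rfl⟩ : ∃ s, m = s + 2 := ⟨m - 2, by omega⟩
  set c : ℝ := ((γ / (2 ^ r * r.factorial)) ^ ((s + 2) ^ r)) ^ (s + 1)
  have hc : 0 < c := by positivity
  refine ⟨c / 2, half_pos hc, max (2 * r + 1) ⌈2 * ((r + 1) * (s + 2)) ^ 2 / c⌉₊,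
    fun n hn E _ hdeg v => ?_⟩
  rw [show (r + 1) * (s + 2) - 1 = r * (s + 2) + s + 1 from Nat.sub_eq_of_eq_add (by ring)]
  refine half_mul_pow_le_of_le_add hc ?_ n.cast_nonneg
    (le_ncard_copies_add_of_minDegree (by omega) E hγ.le hdeg v s)
  exact (Nat.le_ceil _).trans (Nat.cast_le.2 (le_of_max_le_right hn))
end
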